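/- For formulas φ_1,…,φ_n of arrow update model logic and any agent a, the equivalence ⟨↑⟩(⋀_{i=1}^n ◇_a φ_i) ↔ ⋀_{i=1}^n ◇_a⟨↑⟩φ_i is valid. -/

import Mathlib

namespace AAUML

/-- Formulas of arbitrary arrow update model logic over atoms `P` and agents `A`.
An arrow update model is encoded as a finite list of arrows
`(agent, source outcome, source condition, target outcome, target condition)`,
with outcomes drawn from `ℕ`; `upd U o φ` is `[U,o]φ` and `all φ` is `[↑]φ`. -/
inductive Form (P A : Type) : Type where
  | atom : P → Form P A
  | neg  : Form P A → Form P A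
  | and  : Form P A → Form P A → Form P A
  | box  : A → Form P A → Form P A
  | upd  : List (A × ℕ × Form P A × ℕ × Form P A) → ℕ → Form P A → Form P A
  | all  : Form P A → Form P A

/-- An arrow: agent, source outcome, source condition, target outcome, target condition. -/
abbrev Arrow (P A : Type) := A × ℕ × Form P A × ℕ × Form P A

/-- Formulas of basic multi-agent modal logic: no update modality, no quantifier. -/
inductive Form.Modal {P A : Type} : Form P A → Prop
  | atom (p : P) : Form.Modal (.atom p)
  | neg {φ : Form P A} : Form.Modal φ → Form.Modal (.neg φ)
  | and {φ ψ : Form P A} : Form.Modal φ → Form.Modal ψ → Form.Modal (.and φ ψ)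
  | box (a : A) {φ : Form P A} : Form.Modal φ → Form.Modal (.box a φ)

/-- Formulas of arrow update model logic (no arbitrary-update quantifier anywhere,
including inside the conditions of arrow update models). -/
inductive Form.NoQuant {P A : Type} : Form P A → Prop
  | atom (p : P) : Form.NoQuant (.atom p)
  | neg {φ : Form P A} : Form.NoQuant φ → Form.NoQuant (.neg φ)
  | and {φ ψ : Form P A} : Form.NoQuant φ → Form.NoQuant ψ → Form.NoQuant (.and φ ψ)
  | box (a : A) {φ : Form P A} : Form.NoQuant φ → Form.NoQuant (.box a φ)
  | upd {U : List (Arrow P A)} (o : ℕ) {φ : Form P A} : Form.NoQuant φ →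
      (∀ ar ∈ U, Form.NoQuant ar.2.2.1) → (∀ ar ∈ U, Form.NoQuant ar.2.2.2.2) →
      Form.NoQuant (.upd U o φ)

/-- Propositional formulas (no modalities at all). -/
inductive Form.Prp {P A : Type} : Form P A → Prop
  | atom (p : P) : Form.Prp (.atom p)
  | neg {φ : Form P A} : Form.Prp φ → Form.Prp (.neg φ)
  | and {φ ψ : Form P A} : Form.Prp φ → Form.Prp ψ → Form.Prp (.and φ ψ)

/-- A relational (Kripke) model. -/
structure KModel (P A : Type) : Type 1 where
  World : Type
  R : A → World → World → Prop
  V : World → P → Prop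

variable {P A : Type}

/-- Satisfaction for basic modal formulas (junk value `False` on updates/quantifiers;
only used on modal formulas). -/
def msat (M : KModel P A) : M.World → Form P A → Prop
  | s, .atom p => M.V s p
  | s, .neg φ => ¬ msat M s φ
  | s, .and φ ψ => msat M s φ ∧ msat M s ψ
  | s, .box a φ => ∀ t, M.R a s t → msat M t φ
  | _, .upd _ _ _ => False
  | _, .all _ => False

/-- Some arrow of `U` for agent `a` from outcome `o` to outcome `o'` has its (modal)
source condition true at `s` and its target condition true at `s'`. -/
def marrowOK (M : KModel P A) (U : List (Arrow P A)) (a : A) (o o' : ℕ)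
    (s s' : M.World) : Prop :=
  ∃ ψ ψ', (a, o, ψ, o', ψ') ∈ U ∧ msat M s ψ ∧ msat M s' ψ'

/-- All source and target conditions of `U` are basic modal formulas. -/
def ModalArrows (U : List (Arrow P A)) : Prop :=
  ∀ ar ∈ U, Form.Modal ar.2.2.1 ∧ Form.Modal ar.2.2.2.2

mutual
  /-- Satisfaction `M,s ⊨ φ`.  The case `upd U o φ` is interpreted in the product
  model `M*U` (inlined); `all φ` quantifies over all arrow update models with basic
  modal source and target conditions. -/
  def Form.sat : (M : KModel P A) → M.World → Form P A → Prop
    | M, s, .atom p => M.V s p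
    | M, s, .neg φ => ¬ Form.sat M s φ
    | M, s, .and φ ψ => Form.sat M s φ ∧ Form.sat M s ψ
    | M, s, .box a φ => ∀ t, M.R a s t → Form.sat M t φ
    | M, s, .upd U o φ =>
        Form.sat ⟨M.World × ℕ,
          fun a x y => M.R a x.1 y.1 ∧ satList M U a x.2 y.2 x.1 y.1,
          fun x p => M.V x.1 p⟩ (s, o) φ
    | M, s, .all φ => ∀ (U : List (Arrow P A)) (o : ℕ), ModalArrows U →
        Form.sat ⟨M.World × ℕ,
          fun a x y => M.R a x.1 y.1 ∧ marrowOK M U a x.2 y.2 x.1 y.1,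
          fun x p => M.V x.1 p⟩ (s, o) φ
  termination_by M s φ => sizeOf φ

  /-- Some arrow of the list, for agent `a`, from `o` to `o'`, has its source condition
  true at `s` and its target condition true at `s'`. -/
  def satList : (M : KModel P A) → List (Arrow P A) → A → ℕ → ℕ → M.World → M.World → Prop
    | _, [], _, _, _, _, _ => False
    | M, (b, o1, ψ, o2, ψ') :: rest, a, o, o', s, s' =>
        (b = a ∧ o1 = o ∧ o2 = o' ∧ Form.sat M s ψ ∧ Form.sat M s' ψ') ∨
        satList M rest a o o' s s'
  termination_by M U a o o' s s' => sizeOf U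
end

/-- The product `M*U` of a relational model and an arrow update model. -/
def prodModel (M : KModel P A) (U : List (Arrow P A)) : KModel P A :=
  ⟨M.World × ℕ,
   fun a x y => M.R a x.1 y.1 ∧ satList M U a x.2 y.2 x.1 y.1,
   fun x p => M.V x.1 p⟩

def Valid (φ : Form P A) : Prop := ∀ (M : KModel P A) (s : M.World), Form.sat M s φ

def Form.or (φ ψ : Form P A) : Form P A := .neg (.and (.neg φ) (.neg ψ))
def Form.imp (φ ψ : Form P A) : Form P A := .neg (.and φ (.neg ψ))
def Form.dia (a : A) (φ : Form P A) : Form P A := .neg (.box a (.neg φ))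
/-- `⟨U,o⟩φ` -/
def Form.diaUpd (U : List (Arrow P A)) (o : ℕ) (φ : Form P A) : Form P A :=
  .neg (.upd U o (.neg φ))
/-- `⟨↑⟩φ` -/
def Form.ex (φ : Form P A) : Form P A := .neg (.all (.neg φ))
/-- A canonical tautology. -/
def Form.top [Inhabited P] : Form P A := .neg (.and (.atom default) (.neg (.atom default)))
/-- Finite conjunction. -/
def Form.conj [Inhabited P] : List (Form P A) → Form P A
  | [] => Form.top
  | φ :: rest => .and φ (Form.conj rest)

/-- `Z` is a bisimulation between `M` and `N`. -/
def IsBisim (M N : KModel P A) (Z : M.World → N.World → Prop) : Prop :=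
  ∀ s s', Z s s' →
    (∀ p, M.V s p ↔ N.V s' p) ∧
    (∀ a t, M.R a s t → ∃ t', N.R a s' t' ∧ Z t t') ∧
    (∀ a t', N.R a s' t' → ∃ t, M.R a s t ∧ Z t t')

/-- Bisimilarity of pointed models. -/
def Bisimilar (M : KModel P A) (s : M.World) (N : KModel P A) (s' : N.World) : Prop :=
  ∃ Z, IsBisim M N Z ∧ Z s s'

/-- An action model: actions with accessibility relations and preconditions. -/
structure AModel (P A : Type) : Type 1 where
  Action : Type
  rel : A → Action → Action → Prop
  pre : Action → Form P A

/-- The restricted modal product `M ⊗ E`. -/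
def actProd (M : KModel P A) (E : AModel P A) : KModel P A :=
  ⟨{x : M.World × E.Action // Form.sat M x.1 (E.pre x.2)},
   fun a x y => M.R a x.1.1 y.1.1 ∧ E.rel a x.1.2 y.1.2,
   fun x p => M.V x.1.1 p⟩

/-- `M,s ⊨ [E,e]φ`: if the precondition of `e` holds at `s` then `φ` holds at `(s,e)`
in `M ⊗ E`. -/
def actSat (M : KModel P A) (E : AModel P A) (s : M.World) (e : E.Action)
    (φ : Form P A) : Prop :=
  ∀ h : Form.sat M s (E.pre e), Form.sat (actProd M E) ⟨(s, e), h⟩ φ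

/-!
Left to right, the update witnessing `⟨↑⟩` is simply carried into each diamond. Right to
left, suppose each `φᵢ` holds after an update `(Uᵢ, oᵢ)` at some `a`-successor `tᵢ` of `s`.
Take the disjoint union of the `Uᵢ` (outcomes relabelled injectively through `Nat.pair`)
with a fresh root outcome `0` and a `⊤`-guarded `a`-arrow from `0` to each `oᵢ`. In the
product with this union, the copy of `(tᵢ, oᵢ)` is an `a`-successor of `(s, 0)` and is
bisimilar to `(tᵢ, oᵢ)` in the product with `Uᵢ`; formulas of arrow update model logic are
bisimulation invariant, so `φᵢ` holds there.
-/

/-- The product over which `[↑]` quantifies: `prodModel` with conditions read by `msat`. -/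
abbrev modalProd (M : KModel P A) (U : List (Arrow P A)) : KModel P A :=
  ⟨M.World × ℕ,
   fun a x y => M.R a x.1 y.1 ∧ marrowOK M U a x.2 y.2 x.1 y.1,
   fun x p => M.V x.1 p⟩

section Semantics

variable {M : KModel P A} {s : M.World}

lemma sat_atom {p : P} : Form.sat M s (.atom p) ↔ M.V s p := by
  rw [Form.sat]

lemma sat_neg {φ : Form P A} : Form.sat M s (.neg φ) ↔ ¬ Form.sat M s φ := by
  rw [Form.sat]

lemma sat_and {φ ψ : Form P A} :
    Form.sat M s (.and φ ψ) ↔ Form.sat M s φ ∧ Form.sat M s ψ := by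
  rw [Form.sat]

lemma sat_box {a : A} {φ : Form P A} :
    Form.sat M s (.box a φ) ↔ ∀ t, M.R a s t → Form.sat M t φ := by
  rw [Form.sat]

lemma sat_upd {U : List (Arrow P A)} {o : ℕ} {φ : Form P A} :
    Form.sat M s (.upd U o φ) ↔ Form.sat (prodModel M U) (s, o) φ := by
  rw [Form.sat]; rfl

lemma sat_all {φ : Form P A} :
    Form.sat M s (.all φ) ↔ ∀ U o, ModalArrows U → Form.sat (modalProd M U) (s, o) φ := by
  rw [Form.sat]

lemma sat_dia {a : A} {φ : Form P A} :
    Form.sat M s (Form.dia a φ) ↔ ∃ t, M.R a s t ∧ Form.sat M t φ := by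
  simp only [Form.dia, sat_neg, sat_box, not_forall, not_not, exists_prop]

lemma sat_ex {φ : Form P A} :
    Form.sat M s (Form.ex φ) ↔ ∃ U o, ModalArrows U ∧ Form.sat (modalProd M U) (s, o) φ := by
  simp only [Form.ex, sat_neg, sat_all, not_forall, not_not, exists_prop]

lemma msat_top [Inhabited P] : msat M s (Form.top : Form P A) := by
  simp only [Form.top, msat, not_and, not_not, imp_self]

lemma modal_top [Inhabited P] : (Form.top : Form P A).Modal :=
  .neg (.and (.atom _) (.neg (.atom _)))

lemma sat_top [Inhabited P] : Form.sat M s (Form.top : Form P A) := by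
  simp only [Form.top, sat_neg, sat_and, sat_atom, not_and, not_not, imp_self]

lemma sat_conj [Inhabited P] {l : List (Form P A)} :
    Form.sat M s (Form.conj l) ↔ ∀ ψ ∈ l, Form.sat M s ψ := by
  induction l with
  | nil => simp [Form.conj, sat_top]
  | cons ψ rest ih => simp [Form.conj, sat_and, ih]

lemma satList_iff {U : List (Arrow P A)} {a : A} {o o' : ℕ} {t : M.World} :
    satList M U a o o' s t ↔
      ∃ ψ ψ', (a, o, ψ, o', ψ') ∈ U ∧ Form.sat M s ψ ∧ Form.sat M t ψ' := by
  induction U with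
  | nil => simp [satList]
  | cons ar rest ih =>
    obtain ⟨b, o1, χ, o2, χ'⟩ := ar
    rw [satList, ih]
    constructor
    · rintro (⟨rfl, rfl, rfl, h1, h2⟩ | ⟨ψ, ψ', hmem, h1, h2⟩)
      · exact ⟨χ, χ', List.mem_cons_self, h1, h2⟩
      · exact ⟨ψ, ψ', List.mem_cons_of_mem _ hmem, h1, h2⟩
    · rintro ⟨ψ, ψ', hmem, h1, h2⟩
      rcases List.mem_cons.1 hmem with heq | hmem
      · simp only [Prod.mk.injEq] at heq
        obtain ⟨rfl, rfl, rfl, rfl, rfl⟩ := heq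
        exact Or.inl ⟨rfl, rfl, rfl, h1, h2⟩
      · exact Or.inr ⟨ψ, ψ', hmem, h1, h2⟩

end Semantics

section Bisimulation

lemma IsBisim.prodModel {M N : KModel P A} {Z : M.World → N.World → Prop}
    (hZ : IsBisim M N Z) {U : List (Arrow P A)}
    (hcond : ∀ ar ∈ U, ∀ s s', Z s s' →
      (Form.sat M s ar.2.2.1 ↔ Form.sat N s' ar.2.2.1) ∧
      (Form.sat M s ar.2.2.2.2 ↔ Form.sat N s' ar.2.2.2.2)) :
    IsBisim (prodModel M U) (prodModel N U) (fun x y => Z x.1 y.1 ∧ x.2 = y.2) := by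
  have hlist : ∀ b k m u u' v v', Z u u' → Z v v' →
      (satList M U b k m u v ↔ satList N U b k m u' v') := by
    intro b k m u u' v v' hu hv
    simp only [satList_iff]
    refine exists₂_congr fun ψ ψ' => ?_
    exact and_congr_right fun hmem =>
      and_congr ((hcond _ hmem u u' hu).1) ((hcond _ hmem v v' hv).2)
  rintro ⟨u, k⟩ ⟨u', _⟩ ⟨hu, rfl⟩
  refine ⟨(hZ u u' hu).1, ?_, ?_⟩
  · rintro b ⟨v, m⟩ ⟨hR, hsl⟩
    obtain ⟨v', hv', hZv⟩ := (hZ u u' hu).2.1 b v hR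
    exact ⟨(v', m), ⟨hv', (hlist b k m u u' v v' hu hZv).1 hsl⟩, hZv, rfl⟩
  · rintro b ⟨v', m⟩ ⟨hR, hsl⟩
    obtain ⟨v, hv, hZv⟩ := (hZ u u' hu).2.2 b v' hR
    exact ⟨(v, m), ⟨hv, (hlist b k m u u' v v' hu hZv).2 hsl⟩, hZv, rfl⟩

lemma Form.NoQuant.sat_iff_of_isBisim {φ : Form P A} (hφ : φ.NoQuant) {M N : KModel P A}
    {Z : M.World → N.World → Prop} (hZ : IsBisim M N Z) {s : M.World} {s' : N.World}
    (hs : Z s s') : Form.sat M s φ ↔ Form.sat N s' φ := by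
  induction hφ generalizing M N Z s s' with
  | atom p => rw [sat_atom, sat_atom]; exact (hZ s s' hs).1 p
  | neg _ ih => rw [sat_neg, sat_neg, ih hZ hs]
  | and _ _ ih₁ ih₂ => rw [sat_and, sat_and, ih₁ hZ hs, ih₂ hZ hs]
  | box a _ ih =>
    rw [sat_box, sat_box]
    constructor
    · intro h t' ht'
      obtain ⟨t, ht, hZt⟩ := (hZ s s' hs).2.2 a t' ht'
      exact (ih hZ hZt).1 (h t ht)
    · intro h t ht
      obtain ⟨t', ht', hZt⟩ := (hZ s s' hs).2.1 a t ht
      exact (ih hZ hZt).2 (h t' ht')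
  | upd o _ _ _ ih ih_src ih_tgt =>
    rw [sat_upd, sat_upd]
    exact ih (hZ.prodModel fun ar har _ _ h => ⟨ih_src ar har hZ h, ih_tgt ar har hZ h⟩)
      ⟨hs, rfl⟩

end Bisimulation

section Relabel

def relabel (f : ℕ → ℕ) (ar : Arrow P A) : Arrow P A :=
  (ar.1, f ar.2.1, ar.2.2.1, f ar.2.2.2.1, ar.2.2.2.2)

lemma isBisim_modalProd_relabel (M : KModel P A) {U V : List (Arrow P A)} (f : ℕ → ℕ)
    (hsub : ∀ ar ∈ U, relabel f ar ∈ V)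
    (hback : ∀ b k ψ m' ψ', (b, f k, ψ, m', ψ') ∈ V →
      ∃ m, m' = f m ∧ (b, k, ψ, m, ψ') ∈ U) :
    IsBisim (modalProd M U) (modalProd M V) (fun x y => x.1 = y.1 ∧ y.2 = f x.2) := by
  rintro ⟨u, k⟩ ⟨_, _⟩ ⟨rfl, rfl⟩
  refine ⟨fun p => Iff.rfl, ?_, ?_⟩
  · rintro b ⟨v, m⟩ ⟨hR, ψ, ψ', hmem, h₁, h₂⟩
    exact ⟨(v, f m), ⟨hR, ψ, ψ', hsub _ hmem, h₁, h₂⟩, rfl, rfl⟩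
  · rintro b ⟨v, m'⟩ ⟨hR, ψ, ψ', hmem, h₁, h₂⟩
    obtain ⟨m, rfl, hmem'⟩ := hback b k ψ m' ψ' hmem
    exact ⟨(v, m), ⟨hR, ψ, ψ', hmem', h₁, h₂⟩, rfl, rfl⟩

end Relabel

section RootedUnion

variable [Inhabited P]

/-- Outcome `k` of the `i`-th summand of a `rootedUnion`; `0` is reserved for its root. -/
def tag (i k : ℕ) : ℕ := Nat.pair i k + 1

lemma tag_ne_zero (i k : ℕ) : tag i k ≠ 0 := Nat.succ_ne_zero _

lemma tag_inj {i j k l : ℕ} : tag i k = tag j l ↔ i = j ∧ k = l := by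
  simp [tag, Nat.pair_eq_pair]

def rootedUnion (a : A) {n : ℕ} (Us : Fin n → List (Arrow P A)) (os : Fin n → ℕ) :
    List (Arrow P A) :=
  (List.finRange n).flatMap (fun i => (Us i).map (relabel (tag i))) ++
    (List.finRange n).map (fun i : Fin n => (a, 0, Form.top, tag i (os i), Form.top))

variable {a : A} {n : ℕ} {Us : Fin n → List (Arrow P A)} {os : Fin n → ℕ}

lemma mem_rootedUnion {ar : Arrow P A} :
    ar ∈ rootedUnion a Us os ↔
      (∃ i, ∃ ar' ∈ Us i, relabel (tag i) ar' = ar) ∨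
        ∃ i : Fin n, (a, 0, Form.top, tag i (os i), Form.top) = ar := by
  simp [rootedUnion]

lemma modalArrows_rootedUnion (hUs : ∀ i, ModalArrows (Us i)) :
    ModalArrows (rootedUnion a Us os) := by
  intro ar har
  rcases mem_rootedUnion.1 har with ⟨i, ar', har', rfl⟩ | ⟨i, rfl⟩
  · exact hUs i ar' har'
  · exact ⟨modal_top, modal_top⟩

lemma modalProd_rootedUnion_rel_root {M : KModel P A} {s t : M.World} (h : M.R a s t)
    (i : Fin n) :
    (modalProd M (rootedUnion a Us os)).R a (s, 0) (t, tag i (os i)) :=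
  ⟨h, Form.top, Form.top, mem_rootedUnion.2 (.inr ⟨i, rfl⟩), msat_top, msat_top⟩

lemma isBisim_modalProd_rootedUnion (M : KModel P A) (i : Fin n) :
    IsBisim (modalProd M (Us i)) (modalProd M (rootedUnion a Us os))
      (fun x y => x.1 = y.1 ∧ y.2 = tag i x.2) := by
  refine isBisim_modalProd_relabel M (tag i)
    (fun ar har => mem_rootedUnion.2 (.inl ⟨i, ar, har, rfl⟩)) ?_
  intro b k ψ m' ψ' hmem
  rcases mem_rootedUnion.1 hmem with ⟨j, ⟨b', k', χ, m, χ'⟩, hmem', heq⟩ | ⟨j, heq⟩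
  · simp only [relabel, Prod.mk.injEq, tag_inj] at heq
    obtain ⟨rfl, ⟨hji, rfl⟩, rfl, rfl, rfl⟩ := heq
    obtain rfl := Fin.ext hji
    exact ⟨m, rfl, hmem'⟩
  · exact absurd (congrArg (·.2.1) heq).symm (tag_ne_zero _ _)

end RootedUnion

/-- for formulas `φ₁,…,φₙ` of arrow update model logic,
`⟨↑⟩(⋀ᵢ ◇_a φᵢ) ↔ ⋀ᵢ ◇_a⟨↑⟩φᵢ` is valid. -/
theorem ex_conj_dia (P A : Type) [Inhabited P] (a : A)
    (φs : List (Form P A)) (h : ∀ φ ∈ φs, φ.NoQuant) :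
    ∀ (M : KModel P A) (s : M.World),
      Form.sat M s (Form.ex (Form.conj (φs.map (Form.dia a)))) ↔
        Form.sat M s (Form.conj (φs.map (fun φ => Form.dia a (Form.ex φ)))) := by
  intro M s
  simp only [sat_ex, sat_conj, List.forall_mem_map, sat_dia]
  constructor
  · rintro ⟨U, o, hU, hφs⟩ φ hφ
    obtain ⟨⟨t, o'⟩, ⟨hR, -⟩, hφ⟩ := hφs φ hφ
    exact ⟨t, hR, U, o', hU, hφ⟩
  · intro hφs
    choose ts hR Us os hUs hsat using fun i : Fin φs.length => hφs _ (List.getElem_mem i.2)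
    refine ⟨rootedUnion a Us os, 0, modalArrows_rootedUnion hUs, fun φ hφ => ?_⟩
    obtain ⟨i, hi, rfl⟩ := List.mem_iff_getElem.1 hφ
    let j : Fin φs.length := ⟨i, hi⟩
    refine ⟨(ts j, tag j (os j)), modalProd_rootedUnion_rel_root (hR j) j, ?_⟩
    exact ((h _ hφ).sat_iff_of_isBisim (isBisim_modalProd_rootedUnion M j)
      (s := (ts j, os j)) (s' := (ts j, tag j (os j))) ⟨rfl, rfl⟩).1 (hsat j)

end AAUML
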